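/- For 4/3 < p < 2, let φ(v) = ∫_0^∞ λ e^{−λ} exp(−(v/2)λ²) dλ for v ≥ 0. Then ∫_0^∞ v^{(p−2)/(2(p−1))} φ(v) dv = 2^{(3p−4)/(2(p−1))} Γ((3p−4)/(2(p−1))) Γ((2−p)/(p−1)); in particular the function v ↦ v^{(p−2)/(2(p−1))} φ(v) is integrable on (0,∞). -/

import Mathlib

open MeasureTheory Real

/-- `φ(v) = ∫_0^∞ λ e^{−λ} e^{−vλ²/2} dλ`. -/
noncomputable def phiFun (v : ℝ) : ℝ :=
  ∫ l in Set.Ioi (0 : ℝ), l * Real.exp (-l) * Real.exp (-(v / 2) * l ^ 2)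

/-!
By Tonelli, integrate first in `v`: for fixed `λ > 0`,
`∫_0^∞ v^a e^{-vλ²/2} dv = Γ(a+1) (2/λ²)^{a+1}`, which leaves
`2^{a+1} Γ(a+1) ∫_0^∞ e^{-λ} λ^{-2a-1} dλ = 2^{a+1} Γ(a+1) Γ(-2a)`, finite exactly when
`-1 < a < 0`. The theorem is the case `a = (p-2)/(2(p-1))`.
-/

open Set

section RpowPhi

variable {a : ℝ}

lemma integrableOn_rpow_mul_exp_neg_half_mul_sq (ha : -1 < a) {l : ℝ} (hl : 0 < l) :
    IntegrableOn (fun v : ℝ => v ^ a * exp (-(v / 2) * l ^ 2)) (Ioi 0) := by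
  convert integrableOn_rpow_mul_exp_neg_mul_rpow ha one_pos
    (by positivity : (0 : ℝ) < l ^ 2 / 2) using 4 with v
  rw [rpow_one]
  ring

lemma integral_rpow_mul_exp_neg_half_mul_sq (ha : -1 < a) {l : ℝ} (hl : 0 < l) :
    ∫ v in Ioi (0 : ℝ), v ^ a * exp (-(v / 2) * l ^ 2)
      = 2 ^ (a + 1) * Gamma (a + 1) * l ^ (-(2 * a) - 2) := by
  have hscale : (l ^ 2 / 2) ^ (-(a + 1)) = 2 ^ (a + 1) * l ^ (-(2 * a) - 2) := by
    rw [div_rpow (by positivity) zero_le_two, ← rpow_two, ← rpow_mul hl.le,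
      rpow_neg zero_le_two, div_inv_eq_mul, mul_comm]
    ring_nf
  calc ∫ v in Ioi (0 : ℝ), v ^ a * exp (-(v / 2) * l ^ 2)
      = ∫ v in Ioi (0 : ℝ), v ^ a * exp (-(l ^ 2 / 2) * v ^ (1 : ℝ)) := by
        refine setIntegral_congr_fun measurableSet_Ioi fun v _ => ?_
        rw [rpow_one]
        ring_nf
    _ = 2 ^ (a + 1) * Gamma (a + 1) * l ^ (-(2 * a) - 2) := by
        simp only [integral_rpow_mul_exp_neg_mul_rpow one_pos ha
          (by positivity : (0 : ℝ) < l ^ 2 / 2), div_one, hscale, mul_one]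
        ring

lemma integral_rpow_mul_phiFun_integrand (ha : -1 < a) {l : ℝ} (hl : 0 < l) :
    ∫ v in Ioi (0 : ℝ), v ^ a * (l * exp (-l) * exp (-(v / 2) * l ^ 2))
      = 2 ^ (a + 1) * Gamma (a + 1) * (exp (-l) * l ^ (-(2 * a) - 1)) := by
  have hl1 : l ^ (-(2 * a) - 1) = l * l ^ (-(2 * a) - 2) := by
    rw [mul_comm l, ← rpow_add_one hl.ne', show -(2 * a) - 2 + 1 = -(2 * a) - 1 by ring]
  simp_rw [mul_left_comm _ (l * exp (-l))]
  rw [integral_const_mul, integral_rpow_mul_exp_neg_half_mul_sq ha hl, hl1]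
  ring

lemma integrable_rpow_mul_phiFun_integrand (ha1 : -1 < a) (ha0 : a < 0) :
    Integrable (fun q : ℝ × ℝ => q.1 ^ a * (q.2 * exp (-q.2) * exp (-(q.1 / 2) * q.2 ^ 2)))
      ((volume.restrict (Ioi 0)).prod (volume.restrict (Ioi 0))) := by
  rw [integrable_prod_iff' (by fun_prop)]
  refine ⟨?_, ?_⟩
  · filter_upwards [ae_restrict_mem measurableSet_Ioi] with l (hl : 0 < l)
    exact (integrableOn_rpow_mul_exp_neg_half_mul_sq ha1 hl).const_mul (l * exp (-l)) |>.congr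
      (Filter.Eventually.of_forall fun v => by simp only; ring)
  · refine ((GammaIntegral_convergent (by linarith : 0 < -(2 * a))).const_mul
      (2 ^ (a + 1) * Gamma (a + 1))).congr ?_
    filter_upwards [ae_restrict_mem measurableSet_Ioi] with l (hl : 0 < l)
    rw [← integral_rpow_mul_phiFun_integrand ha1 hl]
    refine setIntegral_congr_fun measurableSet_Ioi fun v (hv : 0 < v) => ?_
    exact (Real.norm_of_nonneg (by positivity)).symm

theorem integral_rpow_mul_phiFun (ha1 : -1 < a) (ha0 : a < 0) :
    (∫ v in Ioi (0 : ℝ), v ^ a * phiFun v = 2 ^ (a + 1) * Gamma (a + 1) * Gamma (-(2 * a))) ∧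
      IntegrableOn (fun v => v ^ a * phiFun v) (Ioi 0) := by
  have hF := integrable_rpow_mul_phiFun_integrand ha1 ha0
  have hphi : (fun v : ℝ => v ^ a * phiFun v) = fun v =>
      ∫ l in Ioi (0 : ℝ), v ^ a * (l * exp (-l) * exp (-(v / 2) * l ^ 2)) := by
    funext v
    rw [phiFun, integral_const_mul]
  refine ⟨?_, hphi ▸ hF.integral_prod_left⟩
  calc ∫ v in Ioi (0 : ℝ), v ^ a * phiFun v
      = ∫ l in Ioi (0 : ℝ), ∫ v in Ioi (0 : ℝ),
          v ^ a * (l * exp (-l) * exp (-(v / 2) * l ^ 2)) := by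
        rw [hphi]
        exact integral_integral_swap hF
    _ = ∫ l in Ioi (0 : ℝ), 2 ^ (a + 1) * Gamma (a + 1) * (exp (-l) * l ^ (-(2 * a) - 1)) :=
        setIntegral_congr_fun measurableSet_Ioi fun l hl =>
          integral_rpow_mul_phiFun_integrand ha1 hl
    _ = 2 ^ (a + 1) * Gamma (a + 1) * Gamma (-(2 * a)) := by
        rw [integral_const_mul, Gamma_eq_integral (s := -(2 * a)) (by linarith)]

end RpowPhi

theorem integral_rpow_phi (p : ℝ) (hp1 : 4 / 3 < p) (hp2 : p < 2) :
    (∫ v in Set.Ioi (0 : ℝ), v ^ ((p - 2) / (2 * (p - 1))) * phiFun v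
        = 2 ^ ((3 * p - 4) / (2 * (p - 1))) * Real.Gamma ((3 * p - 4) / (2 * (p - 1))) *
            Real.Gamma ((2 - p) / (p - 1))) ∧
      IntegrableOn (fun v => v ^ ((p - 2) / (2 * (p - 1))) * phiFun v) (Set.Ioi 0) := by
  have hp : 0 < 2 * (p - 1) := by linarith
  have hp' : p - 1 ≠ 0 := by linarith
  set a := (p - 2) / (2 * (p - 1)) with ha
  have ha1 : -1 < a := by
    rw [ha, lt_div_iff₀ hp]
    linarith
  have ha0 : a < 0 := div_neg_of_neg_of_pos (by linarith) hp
  have hGamma₁ : (3 * p - 4) / (2 * (p - 1)) = a + 1 := by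
    rw [ha]; field_simp; ring
  have hGamma₂ : (2 - p) / (p - 1) = -(2 * a) := by
    rw [ha]; field_simp; ring
  rw [hGamma₁, hGamma₂]
  exact integral_rpow_mul_phiFun ha1 ha0
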